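/- Let M be a complete pointed metric space and let Γ ⊂ F(M) be a (V*)-set with respect to F(M). Then for every ε > 0 there exists R > 0 such that Γ ⊂ F(B(0,R)) + ε B_{F(M)}, where B(0,R) is the closed ball in M of radius R around the base point. -/

import Mathlib

/-!
If the conclusion fails for some `ε`, then for every radius `R` Hahn–Banach gives a norm-one
functional `φ` vanishing on `F(B(o, R))` with `φ γ ≥ ε` for some `γ ∈ Γ`. Approximate `γ` within
`ε / 4` by some `μ` in the span of `δ(B(o, S))`, and clamp the 1-Lipschitz function `φ ∘ δ`
between `± max (2S - d(·, o)) 0`: the result is a 1-Lipschitz function supported in the annulus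
`R < d(·, o) < 2S` which still agrees with `φ ∘ δ` on `B(o, S)`, so its lift `ψ` satisfies
`ψ μ = φ μ` and hence `ψ γ ≥ ε / 2`. Iterating over radii `r₀ < r₁ < ⋯` produces functionals
`fₙ` whose Lipschitz functions have pairwise disjoint supports. Any signed finite sum of them is
then 2-Lipschitz, i.e. of norm at most 2, so `∑ fₙ` is weakly unconditionally Cauchy; but
`fₙ(γₙ) ≥ ε / 2` with `γₙ ∈ Γ`, contradicting the (V*) property.
-/

open Filter Topology Metric Set

noncomputable section

/-- A formal series `∑ yₙ` in a normed space `Y` is weakly unconditionally Cauchy (WUC)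
if `∑ |⟨φ, yₙ⟩| < ∞` for every continuous linear functional `φ` on `Y`. -/
def IsWUC {Y : Type*} [SeminormedAddCommGroup Y] [NormedSpace ℝ Y] (y : ℕ → Y) : Prop :=
  ∀ φ : Y →L[ℝ] ℝ, Summable fun n => |φ (y n)|

/-- `Γ` is a (V*)-set in `X`: for every WUC series `∑ fₙ` in the dual `X*`,
`sup_{x ∈ Γ} |⟨x, fₙ⟩| → 0`. -/
def IsVStarSet {X : Type*} [SeminormedAddCommGroup X] [NormedSpace ℝ X] (Γ : Set X) : Prop :=
  ∀ f : ℕ → (X →L[ℝ] ℝ), IsWUC f →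
    ∀ ε > (0 : ℝ), ∀ᶠ n in atTop, ∀ x ∈ Γ, |f n x| ≤ ε

/-- `Γ` is relatively weakly compact: its closure in the weak topology is compact. -/
def RelWeaklyCompact {X : Type*} [SeminormedAddCommGroup X] [NormedSpace ℝ X]
    (Γ : Set X) : Prop :=
  IsCompact (closure ((toWeakSpace ℝ X) '' Γ))

/-- A normed space has Pełczyński's property (V*) if every (V*)-set is relatively
weakly compact. -/
def HasPropertyVStar (X : Type*) [SeminormedAddCommGroup X] [NormedSpace ℝ X] : Prop :=
  ∀ Γ : Set X, IsVStarSet Γ → RelWeaklyCompact Γ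

/-- `F`, together with the map `δ : M → F`, is (a realization of) the Lipschitz-free space
over the pointed metric space `(M, o)`: `δ` is a base-point-preserving isometric embedding
whose range has dense linear span, and every Lipschitz function `f : M → ℝ` vanishing at
the base point lifts to a continuous linear functional of norm at most `Lip(f)` (this
characterizes `F(M)`, with dual `Lip₀(M)`, up to isometric isomorphism). -/
structure IsLipschitzFree {M : Type*} [MetricSpace M] (o : M)
    {F : Type*} [NormedAddCommGroup F] [NormedSpace ℝ F] (δ : M → F) : Prop where
  isometry : Isometry δ
  map_base : δ o = 0
  dense_span : Dense (Submodule.span ℝ (Set.range δ) : Set F)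
  lift : ∀ (L : NNReal) (f : M → ℝ), LipschitzWith L f → f o = 0 →
    ∃ φ : F →L[ℝ] ℝ, ‖φ‖ ≤ L ∧ ∀ x, φ (δ x) = f x

/-- The subspace of `F` corresponding to the Lipschitz-free space `F(S)` over a subset
`S ⊆ M`: the closed linear span of `δ(S)`. -/
def freeSpan {M : Type*} [MetricSpace M] {F : Type*} [NormedAddCommGroup F]
    [NormedSpace ℝ F] (δ : M → F) (S : Set M) : Submodule ℝ F :=
  (Submodule.span ℝ (δ '' S)).topologicalClosure

theorem mem_freeSpan {M : Type*} [MetricSpace M] {F : Type*} [NormedAddCommGroup F]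
    [NormedSpace ℝ F] (δ : M → F) {S : Set M} {x : M} (hx : x ∈ S) :
    δ x ∈ freeSpan δ S :=
  (Submodule.span ℝ (δ '' S)).le_topologicalClosure
    (Submodule.subset_span ⟨x, hx, rfl⟩)

section WUC

variable {Y : Type*} [SeminormedAddCommGroup Y] [NormedSpace ℝ Y]

theorem isWUC_of_norm_sum_smul_le {y : ℕ → Y} {C : ℝ}
    (h : ∀ θ : ℕ → ℝ, (∀ n, |θ n| ≤ 1) → ∀ N, ‖∑ n ∈ Finset.range N, θ n • y n‖ ≤ C) :
    IsWUC y := by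
  intro φ
  refine summable_of_sum_range_le (c := ‖φ‖ * C) (fun n => abs_nonneg _) fun N => ?_
  have hsign : ∀ n, |(SignType.sign (φ (y n)) : ℝ)| ≤ 1 := fun n => by
    cases SignType.sign (φ (y n)) <;> simp
  calc ∑ n ∈ Finset.range N, |φ (y n)|
      = φ (∑ n ∈ Finset.range N, (SignType.sign (φ (y n)) : ℝ) • y n) := by
        simp only [map_sum, map_smul, smul_eq_mul, sign_mul_self]
    _ ≤ ‖φ‖ * ‖∑ n ∈ Finset.range N, (SignType.sign (φ (y n)) : ℝ) • y n‖ :=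
        (le_abs_self _).trans (φ.le_opNorm _)
    _ ≤ ‖φ‖ * C := by gcongr; exact h _ hsign N

end WUC

theorem Submodule.exists_dual_eq_zero_apply_eq_infDist {E : Type*} [SeminormedAddCommGroup E]
    [NormedSpace ℝ E] (K : Submodule ℝ E) (x : E) :
    ∃ φ : StrongDual ℝ E, ‖φ‖ ≤ 1 ∧ (∀ z ∈ K, φ z = 0) ∧ φ x = infDist x K := by
  obtain ⟨g, hg, hgx⟩ := exists_dual_vector'' ℝ (K.mkQ x)
  refine ⟨g ∘L K.mkQL, ?_, fun z hz => by simp [(Submodule.Quotient.mk_eq_zero K).2 hz], ?_⟩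
  · refine ContinuousLinearMap.opNorm_le_bound _ zero_le_one fun z => ?_
    calc ‖g (K.mkQ z)‖ ≤ ‖g‖ * ‖K.mkQ z‖ := g.le_opNorm _
      _ ≤ 1 * ‖z‖ := mul_le_mul hg (Submodule.Quotient.norm_mk_le K z) (norm_nonneg _) zero_le_one
  · exact hgx.trans (QuotientAddGroup.norm_mk (S := K.toAddSubgroup) x)

section PointedMetric

variable {M : Type*} [PseudoMetricSpace M] {o : M}

theorem LipschitzWith.exists_eqOn_closedBall_support_subset {g : M → ℝ}
    (hg : LipschitzWith 1 g) (hgo : g o = 0) (S : ℝ) :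
    ∃ h : M → ℝ, LipschitzWith 1 h ∧ EqOn h g (closedBall o S) ∧
      Function.support h ⊆ Function.support g ∩ ball o (2 * S) := by
  set c : M → ℝ := fun x => max (2 * S - dist x o) 0
  have hc : LipschitzWith 1 c := by
    simpa using ((LipschitzWith.const (2 * S)).sub (LipschitzWith.dist_left o)).max_const 0
  refine ⟨fun x => max (min (g x) (c x)) (-c x), by simpa using (hg.min hc).max hc.neg, ?_, ?_⟩
  · intro x hx
    have hgx : |g x| ≤ dist x o := by simpa [hgo, Real.dist_eq] using hg.dist_le_mul x o
    have hcx : dist x o ≤ c x := le_max_of_le_left (by linarith [mem_closedBall.1 hx])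
    dsimp only
    rw [min_eq_left (by linarith [le_abs_self (g x)]),
      max_eq_left (by linarith [neg_abs_le (g x)])]
  · intro x hx
    simp only [Function.mem_support, ne_eq, Set.mem_inter_iff, mem_ball] at hx ⊢
    constructor
    · intro hgx
      rw [hgx] at hx
      exact hx (by simp [c])
    · by_contra hfar
      have : c x = 0 := max_eq_right (by linarith)
      rw [this] at hx
      exact hx (by simp)

theorem LipschitzWith.sum_mul_of_subsingleton_support {h : ℕ → M → ℝ} {K : NNReal}
    (hh : ∀ n, LipschitzWith K (h n)) (hdisj : ∀ x, {n | h n x ≠ 0}.Subsingleton)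
    {θ : ℕ → ℝ} (hθ : ∀ n, |θ n| ≤ 1) (A : Finset ℕ) :
    LipschitzWith (2 * K) fun x => ∑ n ∈ A, θ n * h n x := by
  classical
  refine LipschitzWith.of_dist_le_mul fun x y => ?_
  have hcard : ∀ z, (A.filter fun n => h n z ≠ 0).card ≤ 1 := fun z =>
    Finset.card_le_one.2 fun a ha b hb =>
      hdisj z (Finset.mem_filter.1 ha).2 (Finset.mem_filter.1 hb).2
  set B := A.filter fun n => h n x ≠ 0 ∨ h n y ≠ 0
  have hB : (B.card : ℝ) ≤ 2 := by
    have := (Finset.card_union_le _ _).trans (add_le_add (hcard x) (hcard y))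
    rw [← Finset.filter_or] at this
    exact_mod_cast this
  calc dist (∑ n ∈ A, θ n * h n x) (∑ n ∈ A, θ n * h n y)
      = |∑ n ∈ B, θ n * (h n x - h n y)| := by
        rw [Real.dist_eq, ← Finset.sum_sub_distrib, Finset.sum_filter_of_ne]
        · simp only [mul_sub]
        · intro n _ hn
          by_contra! h0
          simp [h0.1, h0.2] at hn
    _ ≤ ∑ n ∈ B, K * dist x y := by
        refine (Finset.abs_sum_le_sum_abs _ _).trans (Finset.sum_le_sum fun n _ => ?_)
        rw [abs_mul, ← Real.dist_eq]
        exact (mul_le_of_le_one_left dist_nonneg (hθ n)).trans ((hh n).dist_le_mul x y)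
    _ ≤ 2 * K * dist x y := by
        rw [Finset.sum_const, nsmul_eq_mul, mul_assoc]
        gcongr

end PointedMetric

theorem freeSpan_mono {M : Type*} [MetricSpace M] {F : Type*} [NormedAddCommGroup F]
    [NormedSpace ℝ F] (δ : M → F) {S T : Set M} (h : S ⊆ T) : freeSpan δ S ≤ freeSpan δ T :=
  Submodule.topologicalClosure_mono (Submodule.span_mono (image_mono h))

namespace IsLipschitzFree

variable {M : Type*} [MetricSpace M] {o : M} {F : Type*} [NormedAddCommGroup F]
  [NormedSpace ℝ F] {δ : M → F}

theorem lipschitzWith_comp (hδ : IsLipschitzFree o δ) {f : StrongDual ℝ F} {K : NNReal}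
    (hf : ‖f‖ ≤ K) : LipschitzWith K fun x => f (δ x) :=
  (f.lipschitz.comp hδ.isometry.lipschitz).weaken <| by
    rw [mul_one, ← NNReal.coe_le_coe, coe_nnnorm]
    exact hf

theorem norm_le_of_lipschitzWith (hδ : IsLipschitzFree o δ) {f : StrongDual ℝ F} {K : NNReal}
    (hf : LipschitzWith K fun x => f (δ x)) : ‖f‖ ≤ K := by
  obtain ⟨ψ, hψ, hψf⟩ := hδ.lift K _ hf (by simp [hδ.map_base])
  have : ψ = f := ContinuousLinearMap.ext_on hδ.dense_span (by rintro _ ⟨x, rfl⟩; exact hψf x)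
  exact this ▸ hψ

theorem exists_mem_span_closedBall (hδ : IsLipschitzFree o δ) (γ : F) {ε : ℝ} (hε : 0 < ε) :
    ∃ S : ℝ, ∃ μ ∈ Submodule.span ℝ (δ '' closedBall o S), ‖γ - μ‖ < ε := by
  obtain ⟨μ, hμ, hγμ⟩ := Metric.mem_closure_iff.1 (hδ.dense_span γ) ε hε
  have hrange : range δ = ⋃ n : ℕ, δ '' closedBall o n := by
    ext y
    simp only [mem_range, mem_iUnion, mem_image, mem_closedBall]
    constructor
    · rintro ⟨x, rfl⟩
      exact ⟨⌈dist x o⌉₊, x, Nat.le_ceil _, rfl⟩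
    · rintro ⟨-, x, -, rfl⟩
      exact ⟨x, rfl⟩
  have hdir : Directed (· ≤ ·) fun n : ℕ => Submodule.span ℝ (δ '' closedBall o n) :=
    Monotone.directed_le fun m n hmn =>
      Submodule.span_mono (image_mono (closedBall_subset_closedBall (by exact_mod_cast hmn)))
  rw [SetLike.mem_coe, hrange, Submodule.span_iUnion] at hμ
  obtain ⟨n, hn⟩ := (Submodule.mem_iSup_of_directed _ hdir).1 hμ
  exact ⟨n, μ, hn, by rwa [← dist_eq_norm]⟩

theorem exists_functional_supported_in_annulus (hδ : IsLipschitzFree o δ) {Γ : Set F} {ε : ℝ}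
    (hε : 0 < ε)
    (hfar : ∀ R, ∃ γ ∈ Γ, ∀ z ∈ freeSpan δ (closedBall o R), ε ≤ ‖γ - z‖) (R : ℝ) :
    ∃ R' > R, ∃ f : StrongDual ℝ F, ‖f‖ ≤ 1 ∧
      (∀ x, f (δ x) ≠ 0 → R < dist x o ∧ dist x o < R') ∧ ∃ γ ∈ Γ, ε / 2 ≤ f γ := by
  obtain ⟨γ, hγΓ, hγ⟩ := hfar R
  set K := freeSpan δ (closedBall o R)
  obtain ⟨φ, hφ, hφK, hφγ⟩ := K.exists_dual_eq_zero_apply_eq_infDist γ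
  have hεφ : ε ≤ φ γ := hφγ ▸ (le_infDist ⟨0, K.zero_mem⟩).2 fun z hz => by
    simpa [dist_eq_norm] using hγ z hz
  obtain ⟨S, μ, hμ, hγμ⟩ := hδ.exists_mem_span_closedBall γ (by positivity : 0 < ε / 4)
  have hφo : φ (δ o) = 0 := by simp [hδ.map_base]
  obtain ⟨h, hh, hhφ, hsupp⟩ :=
    (hδ.lipschitzWith_comp (K := 1) hφ).exists_eqOn_closedBall_support_subset hφo S
  obtain ⟨ψ, hψ, hψh⟩ := hδ.lift 1 h hh (Function.notMem_support.1 fun ho =>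
    (hsupp ho).1 hφo)
  rw [NNReal.coe_one] at hψ
  have hψφ : ψ μ = φ μ :=
    LinearMap.eqOn_span' (f := (ψ : F →ₗ[ℝ] ℝ)) (g := φ)
      (by rintro _ ⟨x, hx, rfl⟩; exact (hψh x).trans (hhφ hx)) hμ
  refine ⟨max (2 * S) (R + 1), by simp, ψ, hψ, fun x hx => ?_, γ, hγΓ, ?_⟩
  · rw [hψh] at hx
    obtain ⟨hφx, hxS⟩ := hsupp hx
    refine ⟨lt_of_not_ge fun hxR => hφx (hφK _ (mem_freeSpan δ (mem_closedBall.2 hxR))),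
      (mem_ball.1 hxS).trans_le (le_max_left _ _)⟩
  · have hdiff : |ψ γ - φ γ| ≤ 2 * (ε / 4) := by
      calc |ψ γ - φ γ| = |(ψ - φ) (γ - μ)| := by simp [hψφ]
        _ ≤ ‖ψ - φ‖ * ‖γ - μ‖ := (ψ - φ).le_opNorm _
        _ ≤ 2 * (ε / 4) := by
          gcongr
          exact (norm_sub_le _ _).trans (by linarith)
    linarith [(abs_le.1 hdiff).1]

theorem isWUC_of_supported_in_annuli (hδ : IsLipschitzFree o δ) {f : ℕ → StrongDual ℝ F}
    {r : ℕ → ℝ} (hr : Monotone r) (hf : ∀ n, ‖f n‖ ≤ 1)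
    (hsupp : ∀ n x, f n (δ x) ≠ 0 → r n < dist x o ∧ dist x o < r (n + 1)) :
    IsWUC f := by
  have hdisj : ∀ x, {n | f n (δ x) ≠ 0}.Subsingleton := by
    intro x m hm n hn
    have key : ∀ {m n}, m < n → f m (δ x) ≠ 0 → f n (δ x) ≠ 0 → False := fun hmn hm hn =>
      ((hsupp _ x hm).2.trans_le (hr hmn)).not_gt (hsupp _ x hn).1
    rcases lt_trichotomy m n with hmn | rfl | hmn
    exacts [(key hmn hm hn).elim, rfl, (key hmn hn hm).elim]
  refine isWUC_of_norm_sum_smul_le (C := 2) fun θ hθ N => ?_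
  have hlip := LipschitzWith.sum_mul_of_subsingleton_support
    (fun n => hδ.lipschitzWith_comp (K := 1) (hf n)) hdisj hθ (Finset.range N)
  exact (hδ.norm_le_of_lipschitzWith (f := ∑ n ∈ Finset.range N, θ n • f n)
    (by simpa using hlip)).trans_eq (by norm_num)

end IsLipschitzFree

theorem vStarSet_almost_in_ball_general
    {M : Type*} [MetricSpace M] (o : M)
    {F : Type*} [NormedAddCommGroup F] [NormedSpace ℝ F]
    (δ : M → F) (hδ : IsLipschitzFree o δ)
    (Γ : Set F) (hΓ : IsVStarSet Γ) :
    ∀ ε > (0 : ℝ), ∃ R > (0 : ℝ),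
      ∀ γ ∈ Γ, ∃ z ∈ freeSpan δ (Metric.closedBall o R), ‖γ - z‖ ≤ ε := by
  intro ε hε
  by_contra! hbad
  have hfar : ∀ R, ∃ γ ∈ Γ, ∀ z ∈ freeSpan δ (closedBall o R), ε ≤ ‖γ - z‖ := fun R => by
    obtain ⟨γ, hγΓ, hγ⟩ := hbad (max R 1) (by positivity)
    exact ⟨γ, hγΓ, fun z hz =>
      (hγ z (freeSpan_mono δ (closedBall_subset_closedBall (le_max_left _ _)) hz)).le⟩
  choose next hnext f hf hsupp γ hγΓ hfγ using hδ.exists_functional_supported_in_annulus hε hfar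
  set r : ℕ → ℝ := fun n => next^[n] 0
  have hr_succ : ∀ n, r (n + 1) = next (r n) := fun n => Function.iterate_succ_apply' _ _ _
  have hWUC : IsWUC fun n => f (r n) :=
    hδ.isWUC_of_supported_in_annuli (monotone_nat_of_le_succ fun n => hr_succ n ▸ (hnext _).le)
      (fun n => hf _) (fun n x hx => hr_succ n ▸ hsupp _ x hx)
  obtain ⟨n, hn⟩ := (hΓ _ hWUC (ε / 4) (by positivity)).exists
  linarith [le_abs_self (f (r n) (γ (r n))), hn _ (hγΓ (r n)), hfγ (r n)]

/-- If `Γ ⊆ F(M)` is a (V*)-set with respect to `F(M)`, then for every `ε > 0` there is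
`R > 0` such that `Γ ⊆ F(B(0,R)) + ε B_{F(M)}`, where `B(0,R)` is the closed ball of
radius `R` around the base point. -/
theorem vStarSet_almost_in_ball
    {M : Type*} [MetricSpace M] [CompleteSpace M] (o : M)
    {F : Type*} [NormedAddCommGroup F] [NormedSpace ℝ F] [CompleteSpace F]
    (δ : M → F) (hδ : IsLipschitzFree o δ)
    (Γ : Set F) (hΓ : IsVStarSet Γ) :
    ∀ ε > (0 : ℝ), ∃ R > (0 : ℝ),
      ∀ γ ∈ Γ, ∃ z ∈ freeSpan δ (Metric.closedBall o R), ‖γ - z‖ ≤ ε :=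
  vStarSet_almost_in_ball_general o δ hδ Γ hΓ
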